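/- (Theorem 5.1, part 1: certified radius of GenELLIPS with a locally Lipschitz encoder.) Fix D, d ≥ 1, let f : ℝ^D → ℝ^d, let x ∈ ℝ^D, and suppose f is L-Lipschitz on the closed Euclidean ball of radius R around x, for some L > 0 and R ≥ 0. Consider the ELLIPS classifier in the latent space ℝ^d, let z = f(x), suppose the score at z has a unique maximizing class i_* with margin m(z) > 0 and c_M(z) = max_{i≠i_*} ‖Σ_{i_*}⁻¹(z−μ_{i_*}) − Σ_i⁻¹(z−μ_i)‖₂ > 0, and let λ_min = min_{i≠i_*} λ_min(Σ_i⁻¹ − Σ_{i_*}⁻¹). If L·R ≤ m(z) / ( √(c_M(z)² + (−λ_min)_+ · m(z)) + c_M(z) ), then for every x' ∈ ℝ^D with ‖x'−x‖₂ ≤ R and every i ≠ i_*, score(f(x'), i_*) ≥ score(f(x'), i); in particular GenELLIPS classifies x' as class i_*. Here (t)_+ = max(t,0). -/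

import Mathlib

open Matrix Real

/-- The Euclidean (ℓ₂) norm of a vector in `Fin d → ℝ`. -/
noncomputable def l2norm {d : ℕ} (v : Fin d → ℝ) : ℝ :=
  Real.sqrt (v ⬝ᵥ v)

/-- The smallest eigenvalue of a symmetric matrix, given by the Rayleigh quotient
characterization: the infimum of `vᵀ M v` over unit vectors `v`. -/
noncomputable def minEig {d : ℕ} (M : Matrix (Fin d) (Fin d) ℝ) : ℝ :=
  ⨅ v : {v : Fin d → ℝ // v ⬝ᵥ v = 1}, (v : Fin d → ℝ) ⬝ᵥ (M *ᵥ (v : Fin d → ℝ))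

/-- The ELLIPS score of class `i` at point `z`:
`score(z, i) = −(z−μᵢ)ᵀΣᵢ⁻¹(z−μᵢ) − log det Σᵢ + 2 log πᵢ`. -/
noncomputable def score {d K : ℕ} (μ : Fin K → Fin d → ℝ)
    (S : Fin K → Matrix (Fin d) (Fin d) ℝ) (pri : Fin K → ℝ)
    (z : Fin d → ℝ) (i : Fin K) : ℝ :=
  -((z - μ i) ⬝ᵥ ((S i)⁻¹ *ᵥ (z - μ i))) - Real.log (S i).det + 2 * Real.log (pri i)

/-!
Write `f x' = z + δ`, so `‖δ‖ ≤ L R`. The score gap between `i*` and `i` at `z + δ` is the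
gap at `z`, minus `2 ⟪δ, Σ_{i*}⁻¹(z - μ_{i*}) - Σ_i⁻¹(z - μ_i)⟫`, plus
`δᵀ (Σ_i⁻¹ - Σ_{i*}⁻¹) δ`. Cauchy–Schwarz and the Rayleigh bound make it at least
`m - 2 c_M ‖δ‖ - ν ‖δ‖²` with `ν = (-λ_min)_+`, which is nonnegative as long as `‖δ‖` does not
exceed the nonnegative root of `ν r² + 2 c_M r = m`; that root is the certified radius
`m / (√(c_M² + ν m) + c_M)`.
-/

lemma dotProduct_self_nonneg {n : Type*} [Fintype n] (v : n → ℝ) : 0 ≤ v ⬝ᵥ v :=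
  Finset.sum_nonneg fun i _ => mul_self_nonneg (v i)

lemma isCompact_setOf_dotProduct_self_eq_one (n : Type*) [Fintype n] :
    IsCompact {v : n → ℝ | v ⬝ᵥ v = 1} := by
  refine Metric.isCompact_of_isClosed_isBounded
    (isClosed_eq (by fun_prop) continuous_const) ?_
  refine (Metric.isBounded_closedBall (x := 0) (r := 1)).subset fun v hv => ?_
  rw [mem_closedBall_zero_iff, pi_norm_le_iff_of_nonneg zero_le_one]
  intro k
  rw [Real.norm_eq_abs, abs_le_one_iff_mul_self_le_one, ← hv.out]
  exact Finset.single_le_sum (fun i _ => mul_self_nonneg (v i)) (Finset.mem_univ k)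

lemma minEig_le_dotProduct_mulVec {d : ℕ} (M : Matrix (Fin d) (Fin d) ℝ) {v : Fin d → ℝ}
    (hv : v ⬝ᵥ v = 1) :
    minEig M ≤ v ⬝ᵥ (M *ᵥ v) := by
  refine ciInf_le ?_ (⟨v, hv⟩ : {v : Fin d → ℝ // v ⬝ᵥ v = 1})
  have h := (isCompact_setOf_dotProduct_self_eq_one (Fin d)).bddBelow_image
    (f := fun v => v ⬝ᵥ (M *ᵥ v)) (by fun_prop)
  rwa [Set.image_eq_range] at h

lemma minEig_mul_dotProduct_self_le {d : ℕ} (M : Matrix (Fin d) (Fin d) ℝ) (v : Fin d → ℝ) :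
    minEig M * (v ⬝ᵥ v) ≤ v ⬝ᵥ (M *ᵥ v) := by
  rcases (dotProduct_self_nonneg v).eq_or_lt with h0 | hpos
  · simp [dotProduct_self_eq_zero.mp h0.symm]
  · set r := √(v ⬝ᵥ v)
    have hr : 0 < r := Real.sqrt_pos.mpr hpos
    have hr2 : r ^ 2 = v ⬝ᵥ v := Real.sq_sqrt hpos.le
    have hunit : (r⁻¹ • v) ⬝ᵥ (r⁻¹ • v) = 1 := by
      rw [smul_dotProduct, dotProduct_smul, smul_eq_mul, smul_eq_mul, ← hr2]
      field_simp
    have h := minEig_le_dotProduct_mulVec M hunit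
    rw [mulVec_smul, smul_dotProduct, dotProduct_smul, smul_eq_mul, smul_eq_mul,
      ← mul_assoc, ← pow_two, inv_pow, hr2] at h
    rwa [le_inv_mul_iff₀ hpos, mul_comm] at h

lemma l2norm_nonneg {d : ℕ} (v : Fin d → ℝ) : 0 ≤ l2norm v := Real.sqrt_nonneg _

lemma dotProduct_le_l2norm_mul_l2norm {d : ℕ} (v w : Fin d → ℝ) :
    v ⬝ᵥ w ≤ l2norm v * l2norm w := by
  simpa [l2norm, dotProduct, pow_two] using Real.sum_mul_le_sqrt_mul_sqrt Finset.univ v w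

lemma l2norm_sq {d : ℕ} (v : Fin d → ℝ) : l2norm v ^ 2 = v ⬝ᵥ v :=
  Real.sq_sqrt (dotProduct_self_nonneg v)

lemma Matrix.IsSymm.dotProduct_mulVec_comm {n R : Type*} [Fintype n] [CommSemiring R]
    {A : Matrix n n R} (hA : A.IsSymm) (u v : n → R) :
    u ⬝ᵥ (A *ᵥ v) = v ⬝ᵥ (A *ᵥ u) := by
  rw [dotProduct_mulVec, dotProduct_comm, ← mulVec_transpose, hA.eq]

lemma Matrix.IsSymm.add_dotProduct_mulVec_add {n R : Type*} [Fintype n] [CommRing R]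
    {A : Matrix n n R} (hA : A.IsSymm) (u v : n → R) :
    (u + v) ⬝ᵥ (A *ᵥ (u + v))
      = u ⬝ᵥ (A *ᵥ u) + 2 * (v ⬝ᵥ (A *ᵥ u)) + v ⬝ᵥ (A *ᵥ v) := by
  rw [mulVec_add, add_dotProduct, dotProduct_add, dotProduct_add, hA.dotProduct_mulVec_comm u v]
  ring

section Score

variable {d K : ℕ} (μ : Fin K → Fin d → ℝ) (S : Fin K → Matrix (Fin d) (Fin d) ℝ)
  (pri : Fin K → ℝ)

lemma score_add_sub_score_add {i j : Fin K} (hi : (S i)⁻¹.IsSymm) (hj : (S j)⁻¹.IsSymm)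
    (z δ : Fin d → ℝ) :
    score μ S pri (z + δ) j - score μ S pri (z + δ) i
      = score μ S pri z j - score μ S pri z i
        - 2 * (δ ⬝ᵥ ((S j)⁻¹ *ᵥ (z - μ j) - (S i)⁻¹ *ᵥ (z - μ i)))
        + δ ⬝ᵥ (((S i)⁻¹ - (S j)⁻¹) *ᵥ δ) := by
  have hshift (k : Fin K) : z + δ - μ k = (z - μ k) + δ := add_sub_right_comm z δ (μ k)
  simp only [score, hshift, hi.add_dotProduct_mulVec_add,
    hj.add_dotProduct_mulVec_add, sub_mulVec, dotProduct_sub]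
  ring

lemma score_sub_score_le_score_add_sub_score_add {i j : Fin K} (hi : (S i)⁻¹.IsSymm)
    (hj : (S j)⁻¹.IsSymm) (z δ : Fin d → ℝ) :
    score μ S pri z j - score μ S pri z i
        - 2 * l2norm δ * l2norm ((S j)⁻¹ *ᵥ (z - μ j) - (S i)⁻¹ *ᵥ (z - μ i))
        + minEig ((S i)⁻¹ - (S j)⁻¹) * l2norm δ ^ 2
      ≤ score μ S pri (z + δ) j - score μ S pri (z + δ) i := by
  rw [score_add_sub_score_add μ S pri hi hj, l2norm_sq]
  linarith [minEig_mul_dotProduct_self_le ((S i)⁻¹ - (S j)⁻¹) δ,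
    dotProduct_le_l2norm_mul_l2norm δ ((S j)⁻¹ *ᵥ (z - μ j) - (S i)⁻¹ *ᵥ (z - μ i))]

end Score

/-- The nonnegative root `r` of `ν r² + 2 c r = m`. -/
noncomputable def certifiedRadius (m c ν : ℝ) : ℝ :=
  m / (√(c ^ 2 + ν * m) + c)

lemma mul_sq_add_two_mul_le_of_le_certifiedRadius {m c ν ρ : ℝ} (hc : 0 < c) (hν : 0 ≤ ν)
    (hρ : 0 ≤ ρ) (h : ρ ≤ certifiedRadius m c ν) : ν * ρ ^ 2 + 2 * c * ρ ≤ m := by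
  set s := √(c ^ 2 + ν * m)
  have hsc : 0 < s + c := by positivity
  have hρm : ρ * (s + c) ≤ m := (le_div_iff₀ hsc).mp h
  have hm : 0 ≤ m := (mul_nonneg hρ hsc.le).trans hρm
  have hs : s ^ 2 = c ^ 2 + ν * m := Real.sq_sqrt (by positivity)
  have hνρ : ν * ρ ≤ s - c := by
    refine le_of_mul_le_mul_right ?_ hsc
    calc ν * ρ * (s + c) = ν * (ρ * (s + c)) := by ring
      _ ≤ ν * m := mul_le_mul_of_nonneg_left hρm hν
      _ = (s - c) * (s + c) := by linear_combination -hs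
  linarith [mul_le_mul_of_nonneg_left hνρ hρ]

theorem stmt17_general {D d K : ℕ}
    (μ : Fin K → Fin d → ℝ) (S : Fin K → Matrix (Fin d) (Fin d) ℝ)
    (pri : Fin K → ℝ) (hS : ∀ i, (S i).PosDef)
    (f : (Fin D → ℝ) → Fin d → ℝ) (x : Fin D → ℝ) (L R : ℝ) (hL : 0 < L) (hR : 0 ≤ R)
    (hLip : ∀ u v : Fin D → ℝ, l2norm (u - x) ≤ R → l2norm (v - x) ≤ R →
      l2norm (f u - f v) ≤ L * l2norm (u - v))
    (z : Fin d → ℝ) (hz : z = f x) (istar : Fin K)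
    (m cM lam : ℝ)
    (hm : m = score μ S pri z istar - ⨆ i : {i : Fin K // i ≠ istar}, score μ S pri z i)
    (hcM : cM = ⨆ i : {i : Fin K // i ≠ istar},
      l2norm ((S istar)⁻¹ *ᵥ (z - μ istar) - (S i)⁻¹ *ᵥ (z - μ i)))
    (hlam : lam = ⨅ i : {i : Fin K // i ≠ istar}, minEig ((S i)⁻¹ - (S istar)⁻¹))
    (hcMpos : 0 < cM)
    (hcert : L * R ≤ m / (Real.sqrt (cM ^ 2 + max (-lam) 0 * m) + cM)) :
    ∀ x' : Fin D → ℝ, l2norm (x' - x) ≤ R →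
      ∀ i, i ≠ istar → score μ S pri (f x') i ≤ score μ S pri (f x') istar := by
  intro x' hx' i hi
  let j : {j : Fin K // j ≠ istar} := ⟨i, hi⟩
  have hsymm (k : Fin K) : (S k)⁻¹.IsSymm := isHermitian_iff_isSymm.mp (hS k).isHermitian.inv
  set δ := f x' - z with hδ
  have hρ : l2norm δ ≤ L * R := calc
    l2norm δ ≤ L * l2norm (x' - x) := by
      rw [hδ, hz]; exact hLip x' x hx' (by simpa [l2norm] using hR)
    _ ≤ L * R := mul_le_mul_of_nonneg_left hx' hL.le
  have hmargin : m ≤ score μ S pri z istar - score μ S pri z i := hm.trans_le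
    (sub_le_sub_left (le_ciSup (Set.finite_range _).bddAbove j) _)
  have hcMi : l2norm ((S istar)⁻¹ *ᵥ (z - μ istar) - (S i)⁻¹ *ᵥ (z - μ i)) ≤ cM :=
    (le_ciSup (Set.finite_range _).bddAbove j).trans_eq hcM.symm
  have hlami : -max (-lam) 0 ≤ minEig ((S i)⁻¹ - (S istar)⁻¹) :=
    (neg_le.mpr (le_max_left _ _)).trans
      (hlam.trans_le (ciInf_le (Set.finite_range _).bddBelow j))
  have hquad := mul_sq_add_two_mul_le_of_le_certifiedRadius hcMpos (le_max_right _ 0)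
    (l2norm_nonneg δ) (hρ.trans hcert)
  have hpert := score_sub_score_le_score_add_sub_score_add μ S pri (hsymm i) (hsymm istar) z δ
  rw [add_sub_cancel] at hpert
  linarith [mul_le_mul_of_nonneg_left hcMi (l2norm_nonneg δ),
    mul_le_mul_of_nonneg_right hlami (sq_nonneg (l2norm δ))]

theorem stmt17 {D d K : ℕ} (hD : 1 ≤ D) (hd : 1 ≤ d) (hK : 2 ≤ K)
    (μ : Fin K → Fin d → ℝ) (S : Fin K → Matrix (Fin d) (Fin d) ℝ)
    (pri : Fin K → ℝ) (hpri : ∀ i, 0 < pri i) (hS : ∀ i, (S i).PosDef)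
    (f : (Fin D → ℝ) → Fin d → ℝ) (x : Fin D → ℝ) (L R : ℝ) (hL : 0 < L) (hR : 0 ≤ R)
    (hLip : ∀ u v : Fin D → ℝ, l2norm (u - x) ≤ R → l2norm (v - x) ≤ R →
      l2norm (f u - f v) ≤ L * l2norm (u - v))
    (z : Fin d → ℝ) (hz : z = f x) (istar : Fin K)
    (hmaxUnique : ∀ i, i ≠ istar → score μ S pri z i < score μ S pri z istar)
    (m cM lam : ℝ)
    (hm : m = score μ S pri z istar - ⨆ i : {i : Fin K // i ≠ istar}, score μ S pri z i)
    (hcM : cM = ⨆ i : {i : Fin K // i ≠ istar},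
      l2norm ((S istar)⁻¹ *ᵥ (z - μ istar) - (S i)⁻¹ *ᵥ (z - μ i)))
    (hlam : lam = ⨅ i : {i : Fin K // i ≠ istar}, minEig ((S i)⁻¹ - (S istar)⁻¹))
    (hmpos : 0 < m) (hcMpos : 0 < cM)
    (hcert : L * R ≤ m / (Real.sqrt (cM ^ 2 + max (-lam) 0 * m) + cM)) :
    ∀ x' : Fin D → ℝ, l2norm (x' - x) ≤ R →
      ∀ i, i ≠ istar → score μ S pri (f x') i ≤ score μ S pri (f x') istar :=
  stmt17_general μ S pri hS f x L R hL hR hLip z hz istar m cM lam hm hcM hlam hcMpos hcert
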